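/- Let Σ = (G, σ) be a signed graph with n ≥ 3 vertices and m edges, and let λ₁(Σ) be the largest eigenvalue of its adjacency matrix A(Σ). Let t_s(Σ) denote the number of positive triangles of Σ minus the number of negative triangles of Σ. If t_s(Σ) ≥ 0, then λ₁(Σ)² ≤ m + (6 t_s(Σ))^{2/3}. -/

import Mathlib

open Matrix Finset

open scoped Classical in
/-- `σ` is a sign function on the edges of `G`: symmetric and `±1` on edges. -/
def IsSignFn {n : ℕ} (G : SimpleGraph (Fin n)) (σ : Fin n → Fin n → ℝ) : Prop :=
  (∀ i j, σ i j = σ j i) ∧ ∀ i j, G.Adj i j → σ i j = 1 ∨ σ i j = -1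

/-- The adjacency matrix of the signed graph `(G, σ)`. -/
def signedAdj {n : ℕ} (G : SimpleGraph (Fin n)) [DecidableRel G.Adj]
    (σ : Fin n → Fin n → ℝ) : Matrix (Fin n) (Fin n) ℝ :=
  fun i j => if G.Adj i j then σ i j else 0

/-- The sign of a walk: the product of the signs of its edges (with multiplicity). -/
def walkSign {V : Type*} {G : SimpleGraph V} (σ : V → V → ℝ) {u v : V} (w : G.Walk u v) : ℝ :=
  (w.darts.map fun d => σ d.toProd.1 d.toProd.2).prod

/-- A signed graph is balanced if every cycle has sign `+1`. -/
def IsBalanced {V : Type*} (G : SimpleGraph V) (σ : V → V → ℝ) : Prop :=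
  ∀ (u : V) (w : G.Walk u u), w.IsCycle → walkSign σ w = 1

/-- The set of cardinalities of edge sets whose deletion makes `(G, σ)` balanced.
The frustration index is the least element of this set. -/
def FrustrationSet {n : ℕ} (G : SimpleGraph (Fin n)) (σ : Fin n → Fin n → ℝ) : Set ℕ :=
  {k | ∃ F : Finset (Sym2 (Fin n)), ↑F ⊆ G.edgeSet ∧
    IsBalanced (G.deleteEdges ↑F) σ ∧ F.card = k}

/-- `S` induces a balanced complete subgraph of `(G, σ)`:
`S` is a clique and every cycle inside `S` has sign `+1`. -/
def IsBalancedClique {n : ℕ} (G : SimpleGraph (Fin n)) (σ : Fin n → Fin n → ℝ)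
    (S : Finset (Fin n)) : Prop :=
  G.IsClique (S : Set (Fin n)) ∧
    ∀ (u : Fin n) (w : G.Walk u u), w.IsCycle → (∀ v ∈ w.support, v ∈ S) → walkSign σ w = 1

/-- The set of cardinalities of balanced cliques of `(G, σ)`.
The balanced clique number is the greatest element of this set. -/
def BalancedCliqueSet {n : ℕ} (G : SimpleGraph (Fin n)) (σ : Fin n → Fin n → ℝ) : Set ℕ :=
  {k | ∃ S : Finset (Fin n), IsBalancedClique G σ S ∧ S.card = k}

/-- Switching equivalence of two sign functions on the same underlying graph. -/
def SwitchingEquiv {n : ℕ} (G : SimpleGraph (Fin n)) (σ₁ σ₂ : Fin n → Fin n → ℝ) : Prop :=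
  ∃ η : Fin n → ℝ, (∀ v, η v = 1 ∨ η v = -1) ∧ ∀ i j, G.Adj i j → σ₂ i j = η i * σ₁ i j * η j

/-- Six times the number of positive triangles of `(G, σ)`:
the number of ordered triples forming a positive triangle. -/
noncomputable def posTriCount6 {n : ℕ} (G : SimpleGraph (Fin n))
    (σ : Fin n → Fin n → ℝ) : ℕ :=
  Nat.card {t : Fin n × Fin n × Fin n //
    G.Adj t.1 t.2.1 ∧ G.Adj t.2.1 t.2.2 ∧ G.Adj t.2.2 t.1 ∧
      σ t.1 t.2.1 * σ t.2.1 t.2.2 * σ t.2.2 t.1 = 1}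

/-- Six times the number of negative triangles of `(G, σ)`. -/
noncomputable def negTriCount6 {n : ℕ} (G : SimpleGraph (Fin n))
    (σ : Fin n → Fin n → ℝ) : ℕ :=
  Nat.card {t : Fin n × Fin n × Fin n //
    G.Adj t.1 t.2.1 ∧ G.Adj t.2.1 t.2.2 ∧ G.Adj t.2.2 t.1 ∧
      σ t.1 t.2.1 * σ t.2.1 t.2.2 * σ t.2.2 t.1 = -1}

/-!
Let `x` be the eigenvalues of `A(Σ)` and `l = λ₁`. The trace moments give `∑ x = 0` (so `l ≥ 0`),
`∑ x² = 2m` and `∑ x³ = T = 6 t_s`. For the remaining eigenvalues, with square sum `S = 2m - l²`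
and cube sum `R = T - l³`, Cauchy–Schwarz gives `R² ≤ S³`, hence `l³ ≤ u³ + w³` with
`u = T^(1/3)` and `w = √S`. The `ℓ³ ≤ ℓ²` norm inequality for the pair `(u, w)` turns this into
`l² ≤ u² + w² = T^(2/3) + 2m - l²`, i.e. `l² ≤ m + T^(2/3) / 2`.
-/

namespace Matrix.IsHermitian

variable {ι 𝕜 : Type*} [Fintype ι] [DecidableEq ι] [RCLike 𝕜] {A : Matrix ι ι 𝕜}

theorem trace_pow_eq_sum_eigenvalues_pow (hA : A.IsHermitian) (k : ℕ) :
    (A ^ k).trace = ∑ i, ((hA.eigenvalues i ^ k : ℝ) : 𝕜) := by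
  rw [← cfc_pow_id (R := ℝ) A k hA.isSelfAdjoint, hA.cfc_eq, IsHermitian.cfc,
    Unitary.conjStarAlgAut_apply, trace_mul_cycle,
    Unitary.star_mul_self_of_mem hA.eigenvectorUnitary.2, one_mul, trace_diagonal]
  rfl

end Matrix.IsHermitian

theorem Finset.sq_sum_pow_three_le_pow_three_sum_sq {ι : Type*} (s : Finset ι) (f : ι → ℝ) :
    (∑ i ∈ s, f i ^ 3) ^ 2 ≤ (∑ i ∈ s, f i ^ 2) ^ 3 := by
  calc (∑ i ∈ s, f i ^ 3) ^ 2 = (∑ i ∈ s, f i ^ 2 * f i) ^ 2 := by simp only [← pow_succ]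
    _ ≤ (∑ i ∈ s, (f i ^ 2) ^ 2) * ∑ i ∈ s, f i ^ 2 := sum_mul_sq_le_sq_mul_sq s _ _
    _ ≤ (∑ i ∈ s, f i ^ 2) ^ 2 * ∑ i ∈ s, f i ^ 2 := by
      gcongr
      exact sum_sq_le_sq_sum_of_nonneg fun i _ => sq_nonneg (f i)
    _ = (∑ i ∈ s, f i ^ 2) ^ 3 := by ring

theorem sq_le_sq_add_sq_of_pow_three_le {l u w : ℝ} (hl : 0 ≤ l) (h : l ^ 3 ≤ u ^ 3 + w ^ 3) :
    l ^ 2 ≤ u ^ 2 + w ^ 2 := by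
  have h₃ : (u ^ 3 + w ^ 3) ^ 2 ≤ (u ^ 2 + w ^ 2) ^ 3 := by
    simpa [Fin.sum_univ_two] using sq_sum_pow_three_le_pow_three_sum_sq univ ![u, w]
  refine le_of_pow_le_pow_left₀ three_ne_zero (by positivity) ?_
  calc (l ^ 2) ^ 3 = (l ^ 3) ^ 2 := by ring
    _ ≤ (u ^ 3 + w ^ 3) ^ 2 := pow_le_pow_left₀ (by positivity) h 2
    _ ≤ (u ^ 2 + w ^ 2) ^ 3 := h₃

theorem two_mul_sq_le_sum_sq_add_rpow {ι : Type*} [Fintype ι] [DecidableEq ι] (x : ι → ℝ)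
    {i : ι} (hi : 0 ≤ x i) (hT : 0 ≤ ∑ j, x j ^ 3) :
    2 * x i ^ 2 ≤ ∑ j, x j ^ 2 + (∑ j, x j ^ 3) ^ ((2 : ℝ) / 3) := by
  set T := ∑ j, x j ^ 3
  set S := ∑ j ∈ univ.erase i, x j ^ 2
  set R := ∑ j ∈ univ.erase i, x j ^ 3
  have hS : 0 ≤ S := sum_nonneg fun j _ => sq_nonneg (x j)
  have hR : -R ≤ √S ^ 3 := by
    refine neg_le.mp (abs_le_of_sq_le_sq' ?_ (by positivity)).1
    rw [← pow_mul, mul_comm, pow_mul, Real.sq_sqrt hS]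
    exact sq_sum_pow_three_le_pow_three_sum_sq _ x
  set u := T ^ ((3 : ℕ)⁻¹ : ℝ)
  have hu : u ^ 3 = T := Real.rpow_inv_natCast_pow hT three_ne_zero
  have hu2 : u ^ 2 = T ^ ((2 : ℝ) / 3) := by
    rw [← Real.rpow_natCast, ← Real.rpow_mul hT]; norm_num
  have hsplit2 : x i ^ 2 + S = ∑ j, x j ^ 2 := add_sum_erase _ (fun j => x j ^ 2) (mem_univ i)
  have hsplit3 : x i ^ 3 + R = T := add_sum_erase _ (fun j => x j ^ 3) (mem_univ i)
  have hl := sq_le_sq_add_sq_of_pow_three_le hi (u := u) (w := √S) (by linarith)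
  rw [Real.sq_sqrt hS] at hl
  linarith

theorem nonneg_of_isGreatest_range_of_sum_eq_zero {ι : Type*} [Fintype ι] {x : ι → ℝ} {l : ℝ}
    (hl : IsGreatest (Set.range x) l) (hx : ∑ i, x i = 0) : 0 ≤ l := by
  obtain ⟨i, rfl⟩ := hl.1
  obtain ⟨j, -, hj⟩ := exists_le_of_sum_le (univ_nonempty_iff.mpr ⟨i⟩)
    (show ∑ _j, (0 : ℝ) ≤ ∑ j, x j by simp [hx])
  exact hj.trans (hl.2 ⟨j, rfl⟩)

section SignedGraph

variable {n : ℕ} {G : SimpleGraph (Fin n)} {σ : Fin n → Fin n → ℝ}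

theorem IsSignFn.mul_symm_eq_one (hσ : IsSignFn G σ) {i j : Fin n} (h : G.Adj i j) :
    σ i j * σ j i = 1 := by
  rw [← hσ.1 i j]
  rcases hσ.2 i j h with h₁ | h₁ <;> simp [h₁]

theorem IsSignFn.mul_mul_eq_one_or_eq_neg_one (hσ : IsSignFn G σ) {i j k : Fin n} (hij : G.Adj i j)
    (hjk : G.Adj j k) (hki : G.Adj k i) :
    σ i j * σ j k * σ k i = 1 ∨ σ i j * σ j k * σ k i = -1 := by
  rcases hσ.2 i j hij with h₁ | h₁ <;> rcases hσ.2 j k hjk with h₂ | h₂ <;>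
    rcases hσ.2 k i hki with h₃ | h₃ <;> simp [h₁, h₂, h₃]

variable [DecidableRel G.Adj]

theorem trace_signedAdj : (signedAdj G σ).trace = 0 := by
  simp [trace, signedAdj]

theorem signedAdj_mul_self_apply_self (hσ : IsSignFn G σ) (i : Fin n) :
    (signedAdj G σ * signedAdj G σ) i i = G.degree i := by
  rw [← G.adjMatrix_mul_self_apply_self, mul_apply, mul_apply]
  refine sum_congr rfl fun j _ => ?_
  by_cases h : G.Adj i j
  · simp [signedAdj, h, h.symm, hσ.mul_symm_eq_one h]
  · simp [signedAdj, h]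

theorem trace_signedAdj_sq (hσ : IsSignFn G σ) :
    (signedAdj G σ ^ 2).trace = 2 * #G.edgeFinset := by
  simp only [sq, trace, diag_apply, signedAdj_mul_self_apply_self hσ]
  exact_mod_cast G.sum_degrees_eq_twice_card_edges

theorem signedAdj_mul_mul_apply (hσ : IsSignFn G σ) (i j k : Fin n) :
    signedAdj G σ i j * signedAdj G σ j k * signedAdj G σ k i =
      (if G.Adj i j ∧ G.Adj j k ∧ G.Adj k i ∧ σ i j * σ j k * σ k i = 1 then 1 else 0) -
        (if G.Adj i j ∧ G.Adj j k ∧ G.Adj k i ∧ σ i j * σ j k * σ k i = -1 then 1 else 0) := by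
  by_cases hij : G.Adj i j <;> by_cases hjk : G.Adj j k <;> by_cases hki : G.Adj k i <;>
    simp only [signedAdj, hij, hjk, hki, if_true, if_false, true_and, false_and, and_false,
      mul_zero, zero_mul, sub_zero]
  rcases hσ.mul_mul_eq_one_or_eq_neg_one hij hjk hki with h | h <;> norm_num [h]

theorem trace_signedAdj_pow_three (hσ : IsSignFn G σ) :
    (signedAdj G σ ^ 3).trace = (posTriCount6 G σ : ℝ) - negTriCount6 G σ := by
  have : (signedAdj G σ ^ 3).trace = ∑ t : Fin n × Fin n × Fin n,
      signedAdj G σ t.1 t.2.1 * signedAdj G σ t.2.1 t.2.2 * signedAdj G σ t.2.2 t.1 := by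
    simp only [pow_succ, pow_zero, one_mul, trace, diag_apply, mul_apply, sum_mul,
      Fintype.sum_prod_type]
    exact sum_congr rfl fun i _ => sum_comm
  simp only [this, signedAdj_mul_mul_apply hσ, sum_sub_distrib, sum_boole, posTriCount6,
    negTriCount6, Nat.card_eq_fintype_card, Fintype.card_subtype]

end SignedGraph

theorem stmt_14_general {n : ℕ} (G : SimpleGraph (Fin n)) [DecidableRel G.Adj]
    (σ : Fin n → Fin n → ℝ) (hσ : IsSignFn G σ)
    (hA : (signedAdj G σ).IsHermitian)
    (lam1 : ℝ) (hlam : IsGreatest (Set.range hA.eigenvalues) lam1)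
    (ts : ℤ) (hts : 6 * ts = (posTriCount6 G σ : ℤ) - (negTriCount6 G σ : ℤ))
    (h0 : 0 ≤ ts) :
    lam1 ^ 2 ≤ (G.edgeFinset.card : ℝ) + (6 * (ts : ℝ)) ^ ((2 : ℝ) / 3) := by
  have hmoment (k : ℕ) : ∑ i, hA.eigenvalues i ^ k = (signedAdj G σ ^ k).trace := by
    simp [hA.trace_pow_eq_sum_eigenvalues_pow]
  have hsum : ∑ i, hA.eigenvalues i = 0 := by
    simpa [trace_signedAdj] using hmoment 1
  have hsum_sq : ∑ i, hA.eigenvalues i ^ 2 = 2 * #G.edgeFinset := by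
    rw [hmoment, trace_signedAdj_sq hσ]
  have hsum_cube : ∑ i, hA.eigenvalues i ^ 3 = 6 * ts := by
    rw [hmoment, trace_signedAdj_pow_three hσ]
    exact_mod_cast hts.symm
  have hT : (0 : ℝ) ≤ 6 * ts := by positivity
  have hlam0 := nonneg_of_isGreatest_range_of_sum_eq_zero hlam hsum
  obtain ⟨i, rfl⟩ := hlam.1
  have hl := two_mul_sq_le_sum_sq_add_rpow hA.eigenvalues hlam0 (hsum_cube ▸ hT)
  rw [hsum_sq, hsum_cube] at hl
  linarith [Real.rpow_nonneg hT ((2 : ℝ) / 3)]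

/-- If `t_s(Σ) ≥ 0`, then `λ₁(Σ)² ≤ m + (6 t_s(Σ))^(2/3)`. -/
theorem stmt_14 {n : ℕ} (hn : 3 ≤ n) (G : SimpleGraph (Fin n)) [DecidableRel G.Adj]
    (σ : Fin n → Fin n → ℝ) (hσ : IsSignFn G σ)
    (hA : (signedAdj G σ).IsHermitian)
    (lam1 : ℝ) (hlam : IsGreatest (Set.range hA.eigenvalues) lam1)
    (ts : ℤ) (hts : 6 * ts = (posTriCount6 G σ : ℤ) - (negTriCount6 G σ : ℤ))
    (h0 : 0 ≤ ts) :
    lam1 ^ 2 ≤ (G.edgeFinset.card : ℝ) + (6 * (ts : ℝ)) ^ ((2 : ℝ) / 3) :=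
  stmt_14_general G σ hσ hA lam1 hlam ts hts h0
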